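/- (Universal adjoint vanishes on the translated origin) For a d-dimensional simple polytope P with minimal facet matrix U ∈ ℝ^{n×d}, the universal adjoint Adj_P(x) = ∑_{v∈V(P)} |det U_v| · ∏_{F ∌ v} x_F satisfies Adj_P(U·y) = 0 for all y ∈ ℝᵈ. -/

import Mathlib

/-!
At a simple vertex `v` the directions `w_{v,F}` of the edges leaving the facets `F ∋ v` form the
basis dual to the normals `u_F`, so `c·y = ∑_{F ∋ v} (u_F·y) (c·w_{v,F})` and
`(c·y) |det U_v| ∏_{G ∌ v} u_G·y = ∑_{F ∋ v} |det U_v| (c·w_{v,F}) ∏_{G ∉ S_v ∖ {F}} u_G·y`.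
The product in each summand depends only on the edge `S_v ∖ {F}`. Following that edge from `v`
leads to the adjacent vertex `v'`, which lies on a new facet `F'` with `β = u_{F'}·w_{v,F} < 0`.
Then `w_{v',F'} = w_{v,F} / β` and `|det U_{v'}| = -β |det U_v|`, so the two ends of every edge
cancel. Writing `|det U_v| = √(det ∑_{F ∋ v} u_F u_Fᵀ)` makes the comparison of determinants
independent of how the rows are ordered. Taking `c = y` proves the claim for `y ≠ 0`; for `y = 0`,
boundedness means every vertex misses some facet.
-/

open Matrix Finset
open scoped Topology

namespace Matrix

variable {m n R : Type*} [CommRing R]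

theorem transpose_mul_self_eq_sum_vecMulVec [Fintype m] (A : Matrix m n R) :
    Aᵀ * A = ∑ i, vecMulVec (A i) (A i) := by
  ext j k
  simp [mul_apply, Matrix.sum_apply, vecMulVec_apply]

variable [Fintype n] [DecidableEq n]

theorem det_sq_eq_det_sum_vecMulVec (A : Matrix n n R) :
    A.det ^ 2 = (∑ i, vecMulVec (A i) (A i)).det := by
  rw [← transpose_mul_self_eq_sum_vecMulVec, det_mul, det_transpose, sq]

theorem det_updateRow_eq_det_mul_dotProduct {A : Matrix n n R} {k : n} {w : n → R}
    (hw : A *ᵥ w = Pi.single k 1) (x : n → R) :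
    (A.updateRow k x).det = A.det * (x ⬝ᵥ w) := by
  have hadj : adjugate A *ᵥ Pi.single k 1 = A.det • w := by
    rw [← hw, mulVec_mulVec, adjugate_mul, smul_mulVec, one_mulVec]
  calc (A.updateRow k x).det = x ⬝ᵥ (adjugate A *ᵥ Pi.single k 1) := by
        rw [det_eq_sum_mul_adjugate_row _ k, dotProduct]
        refine sum_congr rfl fun j _ => ?_
        simp [adjugate_apply, updateRow_idem]
    _ = A.det * (x ⬝ᵥ w) := by rw [hadj, dotProduct_smul, smul_eq_mul]

end Matrix

section Spanning

variable {ι m K : Type*} [Fintype m] [Field K]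

def IsSpanning (U : ι → m → K) (A : Finset ι) : Prop :=
  ∀ x, (∀ t ∈ A, U t ⬝ᵥ x = 0) → x = 0

def IsEdgeDirection [DecidableEq ι] (U : ι → m → K) (A : Finset ι) (a : ι) (w : m → K) : Prop :=
  ∀ t ∈ A, U t ⬝ᵥ w = if t = a then 1 else 0

variable {U : ι → m → K} {A : Finset ι} {a b : ι} {w : m → K}

theorem IsSpanning.mono {B : Finset ι} (hA : IsSpanning U A) (hAB : A ⊆ B) : IsSpanning U B :=
  fun x hx => hA x fun t ht => hx t (hAB ht)

variable [DecidableEq ι]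

theorem IsSpanning.eq_smul_of_isEdgeDirection (hA : IsSpanning U A) (hw : IsEdgeDirection U A a w)
    {x : m → K} (hx : ∀ t ∈ A.erase a, U t ⬝ᵥ x = 0) : x = (U a ⬝ᵥ x) • w := by
  refine sub_eq_zero.1 (hA _ fun t ht => ?_)
  rw [dotProduct_sub, dotProduct_smul, hw t ht, smul_eq_mul]
  by_cases hta : t = a
  · simp [hta]
  · simp [hta, hx t (mem_erase.2 ⟨hta, ht⟩)]

theorem IsSpanning.isEdgeDirection_unique (hA : IsSpanning U A) (ha : a ∈ A) {w' : m → K}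
    (hw : IsEdgeDirection U A a w) (hw' : IsEdgeDirection U A a w') : w' = w := by
  have h := hA.eq_smul_of_isEdgeDirection hw (x := w') fun t ht => by
    rw [hw' t (mem_of_mem_erase ht), if_neg (ne_of_mem_erase ht)]
  rwa [hw' a ha, if_pos rfl, one_smul] at h

theorem IsSpanning.insert_erase (hA : IsSpanning U A) (hw : IsEdgeDirection U A a w)
    (hb : U b ⬝ᵥ w ≠ 0) : IsSpanning U (insert b (A.erase a)) := by
  intro x hx
  have hxw := hA.eq_smul_of_isEdgeDirection hw fun t ht => hx t (mem_insert_of_mem ht)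
  have hbx := hx b (mem_insert_self b _)
  rw [hxw, dotProduct_smul, smul_eq_mul, mul_eq_zero, or_iff_left hb] at hbx
  rw [hxw, hbx, zero_smul]

theorem IsSpanning.exists_isEdgeDirection (hA : IsSpanning U A) (hcard : #A = Fintype.card m)
    (a : ι) : ∃ w, IsEdgeDirection U A a w := by
  let L := mulVecLin (Matrix.of fun t : A => U t)
  have hL : Function.Surjective L := by
    refine (LinearMap.injective_iff_surjective_of_finrank_eq_finrank (by simp [hcard])).1 ?_
    rw [← LinearMap.ker_eq_bot, LinearMap.ker_eq_bot']
    exact fun x hx => hA x fun t ht => congr_fun hx ⟨t, ht⟩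
  obtain ⟨w, hw⟩ := hL fun t => if (t : ι) = a then 1 else 0
  exact ⟨w, fun t ht => congr_fun hw ⟨t, ht⟩⟩

theorem IsSpanning.sum_dotProduct_mul_dotProduct (hA : IsSpanning U A) {w : ι → m → K}
    (hw : ∀ a ∈ A, IsEdgeDirection U A a (w a)) (x y : m → K) :
    ∑ a ∈ A, (U a ⬝ᵥ y) * (x ⬝ᵥ w a) = x ⬝ᵥ y := by
  have hy : ∑ a ∈ A, (U a ⬝ᵥ y) • w a = y := by
    refine sub_eq_zero.1 (hA _ fun t ht => ?_)
    rw [dotProduct_sub, dotProduct_sum, sub_eq_zero]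
    calc ∑ a ∈ A, U t ⬝ᵥ ((U a ⬝ᵥ y) • w a) = ∑ a ∈ A, if t = a then U a ⬝ᵥ y else 0 :=
          sum_congr rfl fun a ha => by
            rw [dotProduct_smul, hw a ha t ht, smul_eq_mul, mul_ite, mul_one, mul_zero]
      _ = U t ⬝ᵥ y := by rw [sum_ite_eq, if_pos ht]
  conv_rhs => rw [← hy]
  simp only [dotProduct_sum, dotProduct_smul, smul_eq_mul]

theorem IsSpanning.dotProduct_mul_prod_compl [Fintype ι] (hA : IsSpanning U A)
    {w : ι → m → K} (hw : ∀ a ∈ A, IsEdgeDirection U A a (w a)) (x y : m → K) :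
    (x ⬝ᵥ y) * ∏ i ∈ Aᶜ, U i ⬝ᵥ y = x ⬝ᵥ ∑ a ∈ A, (∏ i ∈ (A.erase a)ᶜ, U i ⬝ᵥ y) • w a := by
  rw [← hA.sum_dotProduct_mul_dotProduct hw x y, sum_mul, dotProduct_sum]
  refine sum_congr rfl fun a ha => ?_
  rw [compl_erase, prod_insert (notMem_compl.2 ha), dotProduct_smul, smul_eq_mul]
  ring

end Spanning

section Gram

variable {ι m K : Type*} [Fintype m]

theorem sum_vecMulVec_comp_equiv [CommRing K] (U : ι → m → K) {A : Finset ι} (r : m ≃ A) :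
    ∑ i, vecMulVec (U (r i)) (U (r i)) = ∑ t ∈ A, vecMulVec (U t) (U t) :=
  (r.sum_comp fun t : A => vecMulVec (U t) (U t)).trans
    (sum_coe_sort A fun t => vecMulVec (U t) (U t))

variable [DecidableEq m]

def gramDet [CommRing K] (U : ι → m → K) (A : Finset ι) : K :=
  (∑ t ∈ A, vecMulVec (U t) (U t)).det

theorem det_sq_eq_gramDet [CommRing K] (U : ι → m → K) {A : Finset ι} (r : m ≃ A) :
    (Matrix.of fun i j => U (r i) j).det ^ 2 = gramDet U A := by
  rw [det_sq_eq_det_sum_vecMulVec, gramDet, ← sum_vecMulVec_comp_equiv U r]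
  rfl

theorem abs_det_eq_sqrt_gramDet (U : ι → m → ℝ) {A : Finset ι} (r : m ≃ A) :
    |(Matrix.of fun i j => U (r i) j).det| = √(gramDet U A) := by
  rw [← det_sq_eq_gramDet U r, Real.sqrt_sq_eq_abs]

variable [Field K] [DecidableEq ι] {U : ι → m → K} {A : Finset ι} {a b : ι} {w : m → K}

theorem gramDet_insert_erase (hcard : #A = Fintype.card m) (ha : a ∈ A) (hb : b ∉ A)
    (hw : IsEdgeDirection U A a w) :
    gramDet U (insert b (A.erase a)) = (U b ⬝ᵥ w) ^ 2 * gramDet U A := by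
  obtain ⟨r⟩ : Nonempty (m ≃ A) := ⟨Fintype.equivOfCardEq (by simp [hcard])⟩
  set M := Matrix.of fun i j => U (r i) j
  set k := r.symm ⟨a, ha⟩
  have hMk : M k = U a := by ext j; simp [M, k]
  have hMw : M *ᵥ w = Pi.single k 1 := by
    ext i
    change U (r i) ⬝ᵥ w = _
    rw [hw _ (r i).2, Pi.single_apply]
    simp only [k, Equiv.eq_symm_apply, Subtype.ext_iff]
  have hsum : ∑ i, vecMulVec (M.updateRow k (U b) i) (M.updateRow k (U b) i) =
      ∑ t ∈ insert b (A.erase a), vecMulVec (U t) (U t) := by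
    have hrow : ∀ i, vecMulVec (M.updateRow k (U b) i) (M.updateRow k (U b) i) =
        Function.update (fun i => vecMulVec (M i) (M i)) k (vecMulVec (U b) (U b)) i :=
      Function.apply_update (fun _ u => vecMulVec u u) M k (U b)
    rw [sum_congr rfl fun i _ => hrow i, sum_update_of_mem (mem_univ k), sdiff_singleton_eq_erase,
      sum_insert (fun h => hb (mem_of_mem_erase h)), sum_erase_eq_sub (mem_univ k),
      sum_erase_eq_sub ha, hMk]
    congr 2
    exact sum_vecMulVec_comp_equiv U r
  rw [gramDet, ← hsum, ← det_sq_eq_det_sum_vecMulVec, det_updateRow_eq_det_mul_dotProduct hMw,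
    ← det_sq_eq_gramDet U r]
  ring

end Gram

theorem sqrt_gramDet_smul_insert_erase {ι m : Type*} [Fintype m] [DecidableEq m] [DecidableEq ι]
    {U : ι → m → ℝ} {A : Finset ι} {a b : ι} {w w' : m → ℝ}
    (hA : IsSpanning U A) (hcard : #A = Fintype.card m) (ha : a ∈ A) (hb : b ∉ A)
    (hw : IsEdgeDirection U A a w) (hβ : U b ⬝ᵥ w < 0)
    (hw' : IsEdgeDirection U (insert b (A.erase a)) b w') :
    √(gramDet U (insert b (A.erase a))) • w' = -(√(gramDet U A) • w) := by
  have hw'' : IsEdgeDirection U (insert b (A.erase a)) b ((U b ⬝ᵥ w)⁻¹ • w) := by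
    intro t ht
    rcases mem_insert.1 ht with rfl | ht
    · simp [hβ.ne]
    · have htb : t ≠ b := fun h => hb (h ▸ mem_of_mem_erase ht)
      rw [dotProduct_smul, hw t (mem_of_mem_erase ht), if_neg (ne_of_mem_erase ht), if_neg htb,
        smul_zero]
  rw [(hA.insert_erase hw hβ.ne).isEdgeDirection_unique (mem_insert_self b _) hw'' hw',
    gramDet_insert_erase hcard ha hb hw, Real.sqrt_mul (sq_nonneg _), Real.sqrt_sq_eq_abs,
    abs_of_neg hβ, smul_smul, ← neg_smul]
  congr 1
  field_simp [hβ.ne]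

section Polyhedron

variable {ι m : Type*} [Fintype ι] [Fintype m]

def polyhedron (U : ι → m → ℝ) (z : ι → ℝ) : Set (m → ℝ) :=
  {y | ∀ i, 0 ≤ U i ⬝ᵥ y + z i}

noncomputable def activeSet (U : ι → m → ℝ) (z : ι → ℝ) (v : m → ℝ) : Finset ι :=
  univ.filter fun i => U i ⬝ᵥ v + z i = 0

variable {U : ι → m → ℝ} {z : ι → ℝ} {u v w : m → ℝ} {i a : ι}

@[simp]
theorem mem_activeSet : i ∈ activeSet U z v ↔ U i ⬝ᵥ v + z i = 0 := by
  simp [activeSet]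

theorem dotProduct_add_smul_add (x : m → ℝ) (s c : ℝ) :
    x ⬝ᵥ (v + s • w) + c = (x ⬝ᵥ v + c) + s * (x ⬝ᵥ w) := by
  rw [dotProduct_add, dotProduct_smul, smul_eq_mul]
  ring

theorem mem_extremePoints_polyhedron_iff :
    v ∈ (polyhedron U z).extremePoints ℝ ↔
      v ∈ polyhedron U z ∧ IsSpanning U (activeSet U z v) := by
  refine ⟨fun hv => ⟨hv.1, fun x hx => ?_⟩, fun ⟨hvP, hspan⟩ => ⟨hvP, ?_⟩⟩
  · have hev : ∀ᶠ t in 𝓝 (0 : ℝ), v + t • x ∈ polyhedron U z := by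
      refine Filter.eventually_all.2 fun i => ?_
      simp only [dotProduct_add_smul_add]
      by_cases hi : i ∈ activeSet U z v
      · exact Filter.Eventually.of_forall fun t => by simp [mem_activeSet.1 hi, hx i hi]
      · have hpos : 0 < U i ⬝ᵥ v + z i := (hv.1 i).lt_of_ne (Ne.symm (mt mem_activeSet.2 hi))
        have hcont : Continuous fun t : ℝ => U i ⬝ᵥ v + z i + t * (U i ⬝ᵥ x) := by fun_prop
        exact ((hcont.tendsto' 0 _ (by simp)).eventually (lt_mem_nhds hpos)).mono fun _ => le_of_lt
    obtain ⟨ε, hε, hball⟩ := Metric.eventually_nhds_iff.1 hev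
    have hseg : v ∈ openSegment ℝ (v + (-(ε / 2)) • x) (v + (ε / 2) • x) :=
      ⟨1 / 2, 1 / 2, by norm_num, by norm_num, by norm_num, by module⟩
    have h := hv.2 (hball (by simp [abs_of_pos hε]; linarith))
      (hball (by simp [abs_of_pos hε]; linarith)) hseg
    simpa [hε.ne'] using h
  · rintro x₁ hx₁ x₂ hx₂ ⟨θ, η, hθ, hη, hθη, rfl⟩
    refine sub_eq_zero.1 (hspan _ fun t ht => ?_)
    have h₀ := mem_activeSet.1 ht
    have hsplit : U t ⬝ᵥ (θ • x₁ + η • x₂) + z t =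
        θ * (U t ⬝ᵥ x₁ + z t) + η * (U t ⬝ᵥ x₂ + z t) := by
      rw [dotProduct_add, dotProduct_smul, dotProduct_smul, smul_eq_mul, smul_eq_mul]
      linear_combination (z t) * hθη.symm
    have h₁ : U t ⬝ᵥ x₁ + z t = 0 := by
      nlinarith [mul_nonneg hθ.le (hx₁ t), mul_nonneg hη.le (hx₂ t)]
    rw [dotProduct_sub]
    linarith

theorem exists_dotProduct_neg_of_isBounded (hbdd : Bornology.IsBounded (polyhedron U z))
    (hv : v ∈ polyhedron U z) (hw : w ≠ 0) : ∃ i, U i ⬝ᵥ w < 0 := by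
  by_contra! h
  have hray : ∀ s : ℝ, 0 ≤ s → v + s • w ∈ polyhedron U z := fun s hs i => by
    rw [dotProduct_add_smul_add]
    exact add_nonneg (hv i) (mul_nonneg hs (h i))
  obtain ⟨C, hC⟩ := isBounded_iff_forall_norm_le.1 hbdd
  have hwpos : 0 < ‖w‖ := norm_pos_iff.2 hw
  have hvC : ‖v‖ ≤ C := hC v hv
  have hs : 0 ≤ (C + ‖v‖ + 1) / ‖w‖ := div_nonneg (by linarith [norm_nonneg v]) hwpos.le
  have hfar : ‖((C + ‖v‖ + 1) / ‖w‖) • w‖ = C + ‖v‖ + 1 := by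
    rw [norm_smul, Real.norm_of_nonneg hs, div_mul_cancel₀ _ hwpos.ne']
  have := norm_sub_le (v + ((C + ‖v‖ + 1) / ‖w‖) • w) v
  rw [add_sub_cancel_left, hfar] at this
  linarith [hC _ (hray _ hs)]

theorem exists_isGreatest_add_smul_mem_polyhedron (hv : v ∈ polyhedron U z)
    (hneg : ∃ i, U i ⬝ᵥ w < 0) :
    ∃ M, IsGreatest {s : ℝ | v + s • w ∈ polyhedron U z} M ∧
      ∃ b, U b ⬝ᵥ w < 0 ∧ b ∈ activeSet U z (v + M • w) := by
  obtain ⟨b, hbJ, hmin⟩ := (univ.filter fun i => U i ⬝ᵥ w < 0).exists_min_image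
    (fun i => (U i ⬝ᵥ v + z i) / -(U i ⬝ᵥ w)) (by simpa [Finset.Nonempty] using hneg)
  have hb : U b ⬝ᵥ w < 0 := (mem_filter.1 hbJ).2
  refine ⟨(U b ⬝ᵥ v + z b) / -(U b ⬝ᵥ w), ⟨fun i => ?_, fun s hs => ?_⟩, b, hb, ?_⟩
  · rw [dotProduct_add_smul_add]
    rcases le_or_gt 0 (U i ⬝ᵥ w) with hi | hi
    · exact add_nonneg (hv i) (mul_nonneg (div_nonneg (hv b) (by linarith)) hi)
    · have := hmin i (mem_filter.2 ⟨mem_univ _, hi⟩)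
      rw [le_div_iff₀ (by linarith)] at this
      linarith
  · have := hs b
    rw [dotProduct_add_smul_add] at this
    rw [le_div_iff₀ (by linarith)]
    linarith
  · rw [mem_activeSet, dotProduct_add_smul_add]
    field_simp [hb.ne]
    ring

variable [DecidableEq ι]

theorem eq_add_smul_of_activeSet_erase_subset (hv : v ∈ (polyhedron U z).extremePoints ℝ)
    (ha : a ∈ activeSet U z v) (hw : IsEdgeDirection U (activeSet U z v) a w) {M : ℝ}
    (hM : IsGreatest {s : ℝ | v + s • w ∈ polyhedron U z} M)
    (hu : u ∈ (polyhedron U z).extremePoints ℝ) (huv : u ≠ v)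
    (hsub : (activeSet U z v).erase a ⊆ activeSet U z u) : u = v + M • w := by
  obtain ⟨hvP, hspan⟩ := mem_extremePoints_polyhedron_iff.1 hv
  have hus : u = v + (U a ⬝ᵥ (u - v)) • w := by
    rw [← sub_eq_iff_eq_add']
    refine hspan.eq_smul_of_isEdgeDirection hw fun t ht => ?_
    have hut := mem_activeSet.1 (hsub ht)
    have hvt := mem_activeSet.1 (mem_of_mem_erase ht)
    rw [dotProduct_sub]
    linarith
  set s := U a ⬝ᵥ (u - v)
  have hsM : s ≤ M := hM.2 (show v + s • w ∈ polyhedron U z by rw [← hus]; exact hu.1)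
  have hs : 0 < s := by
    refine lt_of_le_of_ne ?_ fun h => huv (by rw [hus, ← h, zero_smul, add_zero])
    have hua := hu.1 a
    have hva := mem_activeSet.1 ha
    simp only [s, dotProduct_sub]
    linarith
  rcases hsM.lt_or_eq with hlt | rfl
  · have hM0 : 0 < M := hs.trans hlt
    have hseg : u ∈ openSegment ℝ v (v + M • w) := by
      refine ⟨1 - s / M, s / M, sub_pos.2 ((div_lt_one hM0).2 hlt), div_pos hs hM0, by ring, ?_⟩
      rw [hus, smul_add, smul_smul, div_mul_cancel₀ _ hM0.ne']
      module
    exact absurd (hu.2 hvP hM.1 hseg).symm huv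
  · exact hus

theorem exists_adjacent_vertex (hbdd : Bornology.IsBounded (polyhedron U z))
    (hsimple : ∀ v ∈ (polyhedron U z).extremePoints ℝ, #(activeSet U z v) = Fintype.card m)
    (hv : v ∈ (polyhedron U z).extremePoints ℝ) (ha : a ∈ activeSet U z v)
    (hw : IsEdgeDirection U (activeSet U z v) a w) :
    ∃ v' ∈ (polyhedron U z).extremePoints ℝ, ∃ b ∈ activeSet U z v', b ∉ activeSet U z v ∧
      (activeSet U z v').erase b = (activeSet U z v).erase a ∧ U b ⬝ᵥ w < 0 ∧
      ∀ u ∈ (polyhedron U z).extremePoints ℝ, u ≠ v →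
        (activeSet U z v).erase a ⊆ activeSet U z u → u = v' := by
  obtain ⟨hvP, hspan⟩ := mem_extremePoints_polyhedron_iff.1 hv
  have hw0 : w ≠ 0 := by
    rintro rfl
    simpa using hw a ha
  obtain ⟨M, hM, b, hb, hbM⟩ :=
    exists_isGreatest_add_smul_mem_polyhedron hvP (exists_dotProduct_neg_of_isBounded hbdd hvP hw0)
  have hbv : b ∉ activeSet U z v := fun hbv => by
    have := hw b hbv
    split_ifs at this <;> linarith
  have hsub : insert b ((activeSet U z v).erase a) ⊆ activeSet U z (v + M • w) := by
    refine insert_subset hbM fun t ht => ?_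
    rw [mem_activeSet, dotProduct_add_smul_add, mem_activeSet.1 (mem_of_mem_erase ht),
      hw t (mem_of_mem_erase ht), if_neg (ne_of_mem_erase ht), mul_zero, add_zero]
  have hv' : v + M • w ∈ (polyhedron U z).extremePoints ℝ :=
    mem_extremePoints_polyhedron_iff.2 ⟨hM.1, (hspan.insert_erase hw hb.ne).mono hsub⟩
  have hS : activeSet U z (v + M • w) = insert b ((activeSet U z v).erase a) := by
    refine (eq_of_subset_of_card_le hsub ?_).symm
    have hcard := hsimple v hv
    have hpos := card_pos.2 ⟨a, ha⟩
    rw [hsimple _ hv', card_insert_of_notMem (fun h => hbv (mem_of_mem_erase h)),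
      card_erase_of_mem ha]
    omega
  refine ⟨_, hv', b, hS ▸ mem_insert_self _ _, hbv, ?_, hb,
    fun u hu huv hsub' => eq_add_smul_of_activeSet_erase_subset hv ha hw hM hu huv hsub'⟩
  rw [hS, erase_insert fun h => hbv (mem_of_mem_erase h)]

theorem sum_sum_smul_edgeDirection_eq_zero [DecidableEq m]
    (hbdd : Bornology.IsBounded (polyhedron U z))
    (hsimple : ∀ v ∈ (polyhedron U z).extremePoints ℝ, #(activeSet U z v) = Fintype.card m)
    {V : Finset (m → ℝ)} (hV : (V : Set (m → ℝ)) = (polyhedron U z).extremePoints ℝ)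
    {w : (m → ℝ) → ι → m → ℝ}
    (hw : ∀ v ∈ V, ∀ a ∈ activeSet U z v, IsEdgeDirection U (activeSet U z v) a (w v a))
    (F : Finset ι → ℝ) :
    ∑ v ∈ V, ∑ a ∈ activeSet U z v,
      F ((activeSet U z v).erase a) • √(gramDet U (activeSet U z v)) • w v a = 0 := by
  have hVext : ∀ {v}, v ∈ V ↔ v ∈ (polyhedron U z).extremePoints ℝ := by
    intro v
    rw [← hV, mem_coe]
  choose! v' hv' b hbv' hb hT hβ huniq using fun v (hv : v ∈ V) a (ha : a ∈ activeSet U z v) =>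
    exists_adjacent_vertex hbdd hsimple (hVext.1 hv) ha (hw v hv a ha)
  -- pair each flag `(v, a)` with the flag at the other end of the edge `(activeSet U z v).erase a`
  rw [← sum_finset_product' ((V ×ˢ univ).filter fun p => p.2 ∈ activeSet U z p.1) V _
    (by simp)]
  refine sum_involution (fun p _ => (v' p.1 p.2, b p.1 p.2)) ?_ ?_ ?_ ?_ <;>
    rintro ⟨v, a⟩ hp <;> obtain ⟨hv, ha⟩ : v ∈ V ∧ a ∈ activeSet U z v := by simpa using hp
  · have hw' := hw _ (hVext.2 (hv' v hv a ha)) _ (hbv' v hv a ha)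
    rw [← insert_erase (hbv' v hv a ha), hT v hv a ha] at hw'
    have hx := sqrt_gramDet_smul_insert_erase
      (mem_extremePoints_polyhedron_iff.1 (hVext.1 hv)).2 (hsimple v (hVext.1 hv)) ha
      (hb v hv a ha) (hw v hv a ha) (hβ v hv a ha) hw'
    rw [← hT v hv a ha, insert_erase (hbv' v hv a ha)] at hx
    simp only [hT v hv a ha, hx, smul_neg, add_neg_cancel]
  · intro _ h
    have h₁ : v' v a = v := congrArg Prod.fst h
    have h := hbv' v hv a ha
    rw [h₁] at h
    exact hb v hv a ha h
  · simp only [mem_filter, mem_product, mem_univ, and_true]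
    exact ⟨hVext.2 (hv' v hv a ha), hbv' v hv a ha⟩
  · have hv₁ := hVext.2 (hv' v hv a ha)
    have hb₁ := hbv' v hv a ha
    have hback : v' (v' v a) (b v a) = v := by
      refine (huniq _ hv₁ _ hb₁ v (hVext.1 hv)
        (fun h => hb v hv a ha (by rwa [← h] at hb₁)) ?_).symm
      rw [hT v hv a ha]
      exact erase_subset _ _
    have hab : b (v' v a) (b v a) = a := by
      have h := hbv' _ hv₁ _ hb₁
      rw [hback] at h
      by_contra hne
      exact hb _ hv₁ _ hb₁ (mem_of_mem_erase (hT v hv a ha ▸ mem_erase.2 ⟨hne, h⟩))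
    exact Prod.ext hback hab

theorem sum_sqrt_gramDet_mul_prod_compl_eq_zero [DecidableEq m] [Nonempty m]
    (hbdd : Bornology.IsBounded (polyhedron U z))
    (hsimple : ∀ v ∈ (polyhedron U z).extremePoints ℝ, #(activeSet U z v) = Fintype.card m)
    {V : Finset (m → ℝ)} (hV : (V : Set (m → ℝ)) = (polyhedron U z).extremePoints ℝ)
    (y : m → ℝ) :
    ∑ v ∈ V, √(gramDet U (activeSet U z v)) * ∏ i ∈ (activeSet U z v)ᶜ, U i ⬝ᵥ y = 0 := by
  have hVext : ∀ {v}, v ∈ V ↔ v ∈ (polyhedron U z).extremePoints ℝ := by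
    intro v
    rw [← hV, mem_coe]
  have hspan : ∀ v ∈ V, IsSpanning U (activeSet U z v) := fun v hv =>
    (mem_extremePoints_polyhedron_iff.1 (hVext.1 hv)).2
  choose! w hw using fun v (hv : v ∈ V) a (_ : a ∈ activeSet U z v) =>
    (hspan v hv).exists_isEdgeDirection (hsimple v (hVext.1 hv)) a
  rcases eq_or_ne y 0 with rfl | hy
  · refine sum_eq_zero fun v hv => ?_
    obtain ⟨a, ha⟩ : (activeSet U z v).Nonempty :=
      card_pos.1 (by rw [hsimple v (hVext.1 hv)]; exact Fintype.card_pos)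
    obtain ⟨-, -, b, -, hb, -⟩ :=
      exists_adjacent_vertex hbdd hsimple (hVext.1 hv) ha (hw v hv a ha)
    rw [prod_eq_zero (mem_compl.2 hb) (dotProduct_zero _), mul_zero]
  refine (mul_eq_zero.1 ?_).resolve_left (mt dotProduct_self_eq_zero.1 hy)
  calc (y ⬝ᵥ y) * ∑ v ∈ V, √(gramDet U (activeSet U z v)) * ∏ i ∈ (activeSet U z v)ᶜ, U i ⬝ᵥ y
      = ∑ v ∈ V, √(gramDet U (activeSet U z v)) * (y ⬝ᵥ ∑ a ∈ activeSet U z v,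
          (∏ i ∈ ((activeSet U z v).erase a)ᶜ, U i ⬝ᵥ y) • w v a) := by
        rw [mul_sum]
        refine sum_congr rfl fun v hv => ?_
        rw [mul_left_comm, (hspan v hv).dotProduct_mul_prod_compl (hw v hv)]
    _ = y ⬝ᵥ ∑ v ∈ V, ∑ a ∈ activeSet U z v, (∏ i ∈ ((activeSet U z v).erase a)ᶜ, U i ⬝ᵥ y) •
          √(gramDet U (activeSet U z v)) • w v a := by
        simp only [dotProduct_sum, dotProduct_smul, smul_eq_mul, mul_sum]
        exact sum_congr rfl fun v _ => sum_congr rfl fun a _ => by ring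
    _ = 0 := by
        rw [sum_sum_smul_edgeDirection_eq_zero hbdd hsimple hV hw fun T => ∏ i ∈ Tᶜ, U i ⬝ᵥ y,
          dotProduct_zero]

end Polyhedron

theorem stmt_16_general (d n : ℕ) (hd : 0 < d)
    (U : Fin n → Fin d → ℝ) (z : Fin n → ℝ)
    (P : Set (Fin d → ℝ))
    (hP : P = {y : Fin d → ℝ | ∀ i : Fin n, 0 ≤ U i ⬝ᵥ y + z i})
    (hbdd : Bornology.IsBounded P)
    (V : Finset (Fin d → ℝ)) (hV : (V : Set (Fin d → ℝ)) = Set.extremePoints ℝ P)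
    (S : (Fin d → ℝ) → Finset (Fin n))
    (hS : ∀ v : Fin d → ℝ, S v = Finset.univ.filter fun i => U i ⬝ᵥ v + z i = 0)
    (hsimple : ∀ v ∈ V, (S v).card = d)
    (e : ∀ v ∈ V, (S v : Finset (Fin n)) ≃ Fin d) :
    ∀ y : Fin d → ℝ,
      ∑ v ∈ V.attach,
          |Matrix.det (Matrix.of fun i j : Fin d => U ((e v.1 v.2).symm i : S v.1) j)| *
            ∏ i ∈ (S v.1)ᶜ, (U i ⬝ᵥ y) = 0 := by
  subst hP
  obtain rfl : S = activeSet U z := funext hS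
  have : NeZero d := ⟨hd.ne'⟩
  have hsimple' : ∀ v ∈ (polyhedron U z).extremePoints ℝ,
      #(activeSet U z v) = Fintype.card (Fin d) := fun v hv => by
    rw [Fintype.card_fin]
    exact hsimple v (by rwa [← mem_coe, hV])
  intro y
  simp_rw [abs_det_eq_sqrt_gramDet]
  rw [sum_attach V fun v => √(gramDet U (activeSet U z v)) * ∏ i ∈ (activeSet U z v)ᶜ, U i ⬝ᵥ y]
  exact sum_sqrt_gramDet_mul_prod_compl_eq_zero hbdd hsimple' hV y

/-- The universal adjoint of a simple polytope vanishes after the substitution x_F ↦ u_F·y: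
Adj_P(U·y) = ∑_{v ∈ V(P)} |det U_v| ∏_{F ∌ v} (u_F·y) = 0 identically in y. -/
theorem stmt_16 (d n : ℕ) (hd : 0 < d)
    (U : Fin n → Fin d → ℝ) (z : Fin n → ℝ)
    (P : Set (Fin d → ℝ))
    (hP : P = {y : Fin d → ℝ | ∀ i : Fin n, 0 ≤ U i ⬝ᵥ y + z i})
    (hbdd : Bornology.IsBounded P)
    (hfull : (interior P).Nonempty)
    (hmin : ∀ i : Fin n, ∃ y ∈ P, U i ⬝ᵥ y + z i = 0 ∧ ∀ j : Fin n, j ≠ i → 0 < U j ⬝ᵥ y + z j)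
    (V : Finset (Fin d → ℝ)) (hV : (V : Set (Fin d → ℝ)) = Set.extremePoints ℝ P)
    (S : (Fin d → ℝ) → Finset (Fin n))
    (hS : ∀ v : Fin d → ℝ, S v = Finset.univ.filter fun i => U i ⬝ᵥ v + z i = 0)
    (hsimple : ∀ v ∈ V, (S v).card = d)
    (e : ∀ v ∈ V, (S v : Finset (Fin n)) ≃ Fin d) :
    ∀ y : Fin d → ℝ,
      ∑ v ∈ V.attach,
          |Matrix.det (Matrix.of fun i j : Fin d => U ((e v.1 v.2).symm i : S v.1) j)| *
            ∏ i ∈ (S v.1)ᶜ, (U i ⬝ᵥ y) = 0 :=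
  stmt_16_general d n hd U z P hP hbdd V hV S hS hsimple e
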